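/- arXiv:2202.04014 — 2 statements merged into one kernel-verified Lean document; each statement's English description precedes it below -/
import Mathlib

section
/- If a(τ) = τ + Σ_{n≥2} c_n τ^n is analytic at 0 with c₂ = 0, then with ρ(τ) = (3/(8π))·(a'(τ)² − 1)/a(τ)² and p(τ) = −(1/(8π))·(2a''(τ)a(τ) + a'(τ)² − 1)/a(τ)², both ρ and p extend continuously to τ = 0 and the limits satisfy ρ(0) = −p(0) = (3/(8π))·6c₃. -/
/-!
Since `c₀ = c₂ = 0` and `c₁ = 1`, the tail of the power series gives `a τ = τ + τ³ g τ` with `g`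
analytic and `g 0 = c₃`. Then `a'² - 1`, `2 a'' a + a'² - 1` and `a²` are `τ²` times functions
continuous at `0` (with values `6 c₃`, `18 c₃` and `1` there), and cancelling `τ²` gives the limits.
-/

open Filter Topology

namespace FormalMultilinearSeries

theorem ofReal_le_radius_ofScalars {c : ℕ → ℝ} {r : ℝ}
    (h : ∀ t : ℝ, 0 < t → t < r → Tendsto (fun n => c n * t ^ n) atTop (𝓝 0)) :
    ENNReal.ofReal r ≤ (ofScalars ℝ c).radius := by
  refine ENNReal.le_of_forall_pos_nnreal_lt fun t ht htr => ?_
  refine (ofScalars ℝ c).le_radius_of_tendsto (l := 0) ?_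
  simpa [ofScalars_norm] using (h t ht (ENNReal.coe_lt_ofReal.1 htr)).norm

theorem hasFPowerSeriesOnBall_ofScalarsSum {c : ℕ → ℝ} {r : ℝ} (hr : 0 < r)
    (h : ∀ t : ℝ, 0 < t → t < r → Tendsto (fun n => c n * t ^ n) atTop (𝓝 0)) :
    HasFPowerSeriesOnBall (ofScalarsSum c) (ofScalars ℝ c) 0 (ENNReal.ofReal r) :=
  ((ofScalars ℝ c).hasFPowerSeriesOnBall ((ENNReal.ofReal_pos.2 hr).trans_le
    (ofReal_le_radius_ofScalars h))).mono (ENNReal.ofReal_pos.2 hr) (ofReal_le_radius_ofScalars h)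

end FormalMultilinearSeries

open FormalMultilinearSeries in
theorem exists_analyticOnNhd_eq_sum_add_pow_mul {f : ℝ → ℝ} {c : ℕ → ℝ} {r : ℝ} (hr : 0 < r)
    (hf : ∀ τ : ℝ, |τ| < r → HasSum (fun n => c n * τ ^ n) (f τ)) (k : ℕ) :
    ∃ g : ℝ → ℝ, AnalyticOnNhd ℝ g (Metric.ball 0 r) ∧ g 0 = c k ∧
      ∀ τ ∈ Metric.ball (0 : ℝ) r, f τ = ∑ i ∈ Finset.range k, c i * τ ^ i + τ ^ k * g τ := by
  have htail : ∀ t : ℝ, 0 < t → t < r → Tendsto (fun n => c (n + k) * t ^ n) atTop (𝓝 0) := by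
    intro t ht htr
    have h0 := (hf t (by rwa [abs_of_pos ht])).summable.tendsto_atTop_zero
    have := ((tendsto_add_atTop_iff_nat k).2 h0).div_const (t ^ k)
    simp only [zero_div] at this
    refine this.congr fun n => ?_
    field_simp
    ring
  have hg := hasFPowerSeriesOnBall_ofScalarsSum hr htail
  refine ⟨ofScalarsSum fun n => c (n + k), ?_, ?_, fun τ hτ => ?_⟩
  · simpa [Metric.eball_ofReal] using hg.analyticOnNhd
  · simp [ofScalarsSum_zero]
  · have hτ' : τ ∈ Metric.eball (0 : ℝ) (ENNReal.ofReal r) := by rwa [Metric.eball_ofReal]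
    have h1 := hg.hasSum hτ'
    simp only [zero_add, ofScalars_apply_eq, smul_eq_mul] at h1
    have h2 := (hasSum_nat_add_iff' k).2 (hf τ (by simpa using hτ))
    have h3 := (h1.mul_left (τ ^ k)).unique (by simpa [pow_add, mul_comm, mul_left_comm] using h2)
    linarith

variable {g : ℝ → ℝ} {x₀ : ℝ}

theorem AnalyticAt.eventuallyEq_deriv_add_pow_three_mul (hg : AnalyticAt ℝ g x₀) :
    deriv (fun τ => τ + τ ^ 3 * g τ) =ᶠ[𝓝 x₀]
      fun τ => 1 + 3 * τ ^ 2 * g τ + τ ^ 3 * deriv g τ := by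
  filter_upwards [hg.eventually_analyticAt] with τ hτ
  exact (((hasDerivAt_id' τ).add ((hasDerivAt_pow 3 τ).mul
    hτ.differentiableAt.hasDerivAt)).congr_deriv (by norm_num; ring)).deriv

theorem AnalyticAt.eventuallyEq_deriv_deriv_add_pow_three_mul (hg : AnalyticAt ℝ g x₀) :
    deriv (fun τ => 1 + 3 * τ ^ 2 * g τ + τ ^ 3 * deriv g τ) =ᶠ[𝓝 x₀]
      fun τ => 6 * τ * g τ + 6 * τ ^ 2 * deriv g τ + τ ^ 3 * deriv (deriv g) τ := by
  filter_upwards [hg.eventually_analyticAt] with τ hτ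
  exact ((((hasDerivAt_const τ 1).add (((hasDerivAt_pow 2 τ).const_mul 3).mul
    hτ.differentiableAt.hasDerivAt)).add ((hasDerivAt_pow 3 τ).mul
      hτ.deriv.differentiableAt.hasDerivAt)).congr_deriv (by norm_num; ring)).deriv

theorem tendsto_sq_mul_div_sq_mul {N D : ℝ → ℝ} (hN : ContinuousAt N 0) (hD : ContinuousAt D 0)
    (hD0 : D 0 ≠ 0) :
    Tendsto (fun τ => τ ^ 2 * N τ / (τ ^ 2 * D τ)) (𝓝[≠] 0) (𝓝 (N 0 / D 0)) := by
  refine ((hN.div hD hD0).tendsto.mono_left nhdsWithin_le_nhds).congr' ?_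
  filter_upwards [self_mem_nhdsWithin] with τ (hτ : τ ≠ 0)
  exact (mul_div_mul_left _ _ (pow_ne_zero 2 hτ)).symm

variable {a : ℝ → ℝ}

theorem tendsto_deriv_sq_sub_one_div_sq (hg : AnalyticAt ℝ g 0)
    (ha : a =ᶠ[𝓝 0] fun τ => τ + τ ^ 3 * g τ) :
    Tendsto (fun τ => (deriv a τ ^ 2 - 1) / a τ ^ 2) (𝓝[≠] 0) (𝓝 (6 * g 0)) := by
  have hda := ha.deriv.trans hg.eventuallyEq_deriv_add_pow_three_mul
  have hgc := hg.continuousAt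
  have hg'c := hg.deriv.continuousAt
  convert (tendsto_sq_mul_div_sq_mul
    (N := fun τ => (3 * g τ + τ * deriv g τ) * (2 + 3 * τ ^ 2 * g τ + τ ^ 3 * deriv g τ))
    (D := fun τ => (1 + τ ^ 2 * g τ) ^ 2) (by fun_prop) (by fun_prop) (by simp)).congr'
      ?_ using 2
  · norm_num; ring
  · filter_upwards [nhdsWithin_le_nhds ha, nhdsWithin_le_nhds hda] with τ ha hda
    rw [ha, hda]
    congr 1 <;> ring

theorem tendsto_two_mul_deriv_deriv_mul_add_deriv_sq_sub_one_div_sq (hg : AnalyticAt ℝ g 0)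
    (ha : a =ᶠ[𝓝 0] fun τ => τ + τ ^ 3 * g τ) :
    Tendsto (fun τ => (2 * deriv (deriv a) τ * a τ + deriv a τ ^ 2 - 1) / a τ ^ 2) (𝓝[≠] 0)
      (𝓝 (18 * g 0)) := by
  have hda := ha.deriv.trans hg.eventuallyEq_deriv_add_pow_three_mul
  have hdda := hda.deriv.trans hg.eventuallyEq_deriv_deriv_add_pow_three_mul
  have hgc := hg.continuousAt
  have hg'c := hg.deriv.continuousAt
  have hg''c := hg.deriv.deriv.continuousAt
  convert (tendsto_sq_mul_div_sq_mul
    (N := fun τ => 2 * (6 * g τ + 6 * τ * deriv g τ + τ ^ 2 * deriv (deriv g) τ) *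
      (1 + τ ^ 2 * g τ) +
        (3 * g τ + τ * deriv g τ) * (2 + 3 * τ ^ 2 * g τ + τ ^ 3 * deriv g τ))
    (D := fun τ => (1 + τ ^ 2 * g τ) ^ 2) (by fun_prop) (by fun_prop) (by simp)).congr'
      ?_ using 2
  · norm_num; ring
  · filter_upwards [nhdsWithin_le_nhds ha, nhdsWithin_le_nhds hda,
      nhdsWithin_le_nhds hdda] with τ ha hda hdda
    rw [ha, hda, hdda]
    congr 1 <;> ring

theorem statement1_general (a : ℝ → ℝ) (c : ℕ → ℝ) (r : ℝ) (hr : 0 < r)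
    (hc0 : c 0 = 0) (hc1 : c 1 = 1) (hc2 : c 2 = 0)
    (hsum : ∀ τ : ℝ, |τ| < r → HasSum (fun n => c n * τ ^ n) (a τ))
    (ρ p : ℝ → ℝ)
    (hρ : ∀ τ : ℝ, ρ τ = 3 / (8 * Real.pi) * ((deriv a τ) ^ 2 - 1) / (a τ) ^ 2)
    (hp : ∀ τ : ℝ, p τ =
      -(1 / (8 * Real.pi)) * (2 * deriv (deriv a) τ * a τ + (deriv a τ) ^ 2 - 1) / (a τ) ^ 2) :
    Tendsto ρ (𝓝[>] (0 : ℝ)) (𝓝 (3 / (8 * Real.pi) * (6 * c 3))) ∧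
      Tendsto p (𝓝[>] (0 : ℝ)) (𝓝 (-(3 / (8 * Real.pi) * (6 * c 3)))) := by
  obtain ⟨g, hg, hg3, hag⟩ := exists_analyticOnNhd_eq_sum_add_pow_mul hr hsum 3
  have hg0 : AnalyticAt ℝ g 0 := hg 0 (Metric.mem_ball_self hr)
  have ha : a =ᶠ[𝓝 0] fun τ => τ + τ ^ 3 * g τ := by
    filter_upwards [Metric.ball_mem_nhds 0 hr] with τ hτ
    simp [hag τ hτ, Finset.sum_range_succ, hc0, hc1, hc2]
  constructor
  · refine Tendsto.congr (fun τ => by rw [hρ, mul_div_assoc]) ?_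
    convert ((tendsto_deriv_sq_sub_one_div_sq hg0 ha).mono_left (nhdsGT_le_nhdsNE 0)).const_mul
      (3 / (8 * Real.pi)) using 2
    rw [hg3]
  · refine Tendsto.congr (fun τ => by rw [hp, mul_div_assoc]) ?_
    convert ((tendsto_two_mul_deriv_deriv_mul_add_deriv_sq_sub_one_div_sq hg0 ha).mono_left
      (nhdsGT_le_nhdsNE 0)).const_mul (-(1 / (8 * Real.pi))) using 2
    rw [hg3]
    ring

/-- For an analytic scale factor `a(τ) = τ + Σ_{n≥2} c_n τ^n` with `c₂ = 0`,
both the energy density `ρ` and pressure `p` of the `k = −1` FLRW spacetime extend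
continuously to `τ = 0` with `ρ(0) = −p(0) = (3/(8π))·6c₃`. -/
theorem statement1 (a : ℝ → ℝ) (c : ℕ → ℝ) (r : ℝ) (hr : 0 < r)
    (hc0 : c 0 = 0) (hc1 : c 1 = 1) (hc2 : c 2 = 0)
    (hsum : ∀ τ : ℝ, |τ| < r → HasSum (fun n => c n * τ ^ n) (a τ))
    (hpos : ∀ τ : ℝ, 0 < τ → τ < r → 0 < a τ)
    (ρ p : ℝ → ℝ)
    (hρ : ∀ τ : ℝ, ρ τ = 3 / (8 * Real.pi) * ((deriv a τ) ^ 2 - 1) / (a τ) ^ 2)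
    (hp : ∀ τ : ℝ, p τ =
      -(1 / (8 * Real.pi)) * (2 * deriv (deriv a) τ * a τ + (deriv a τ) ^ 2 - 1) / (a τ) ^ 2) :
    Tendsto ρ (𝓝[>] (0 : ℝ)) (𝓝 (3 / (8 * Real.pi) * (6 * c 3))) ∧
      Tendsto p (𝓝[>] (0 : ℝ)) (𝓝 (-(3 / (8 * Real.pi) * (6 * c 3)))) :=
  statement1_general a c r hr hc0 hc1 hc2 hsum ρ p hρ hp
end

section
/- Let a : (0, T) → (0, ∞) be smooth with a(τ) = τ + o(τ^{1+ε}) as τ → 0 for some ε > 0, b(τ) = exp(∫_{τ₀}^τ ds/a(s)), and Ω(τ) = a(τ)/b(τ). Then Ω extends continuously to τ = 0 with Ω(0) = lim_{τ→0⁺} a(τ)/b(τ) existing, positive, and finite. -/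
open Filter Topology Asymptotics
open MeasureTheory intervalIntegral Set in

/-- For a Milne-like scale factor `a(τ) = τ + o(τ^{1+ε})`, with
`b(τ) = exp(∫_{τ₀}^τ ds/a(s))`, the conformal factor `Ω = a/b` has a positive finite limit
as `τ → 0⁺`. -/
theorem statement7 (T ε τ₀ : ℝ) (hT : 0 < T) (hε : 0 < ε) (hτ₀ : τ₀ ∈ Set.Ioo (0 : ℝ) T)
    (a : ℝ → ℝ) (ha : ∀ τ ∈ Set.Ioo (0 : ℝ) T, 0 < a τ)
    (hsm : ContDiffOn ℝ (⊤ : ℕ∞) a (Set.Ioo (0 : ℝ) T))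
    (hMilne : (fun τ => a τ - τ) =o[𝓝[>] (0 : ℝ)] fun τ => τ ^ (1 + ε)) :
    ∃ L : ℝ, 0 < L ∧
      Tendsto (fun τ => a τ / Real.exp (∫ s in τ₀..τ, 1 / a s))
        (𝓝[>] (0 : ℝ)) (𝓝 L) := by
  obtain ⟨hτ₀0, hτ₀T⟩ := hτ₀
  set g : ℝ → ℝ := fun s => 1 / a s - 1 / s with hg_def
  have hca : ContinuousOn a (Set.Ioo 0 T) := hsm.continuousOn
  have hinva_cont : ContinuousOn (fun s => 1 / a s) (Set.Ioo 0 T) :=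
    continuousOn_const.div hca (fun s hs => (ha s hs).ne')
  have hg_cont : ContinuousOn g (Set.Ioo 0 T) :=
    hinva_cont.sub (continuousOn_const.div continuousOn_id (fun s hs => hs.1.ne'))
  -- τ^ε → 0
  have hrpow0 : Tendsto (fun τ : ℝ => τ ^ ε) (𝓝[>] (0:ℝ)) (𝓝 0) := by
    have h := (Real.continuousAt_rpow_const 0 ε (Or.inr hε.le)).tendsto
    rw [Real.zero_rpow hε.ne'] at h
    exact h.mono_left nhdsWithin_le_nhds
  -- a τ / τ → 1
  have hlo : (fun τ => a τ - τ) =o[𝓝[>] (0:ℝ)] fun τ => τ := by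
    refine hMilne.trans ?_
    rw [isLittleO_iff_tendsto']
    · refine hrpow0.congr' ?_
      filter_upwards [self_mem_nhdsWithin] with τ (hτ : 0 < τ)
      rw [Real.rpow_add hτ, Real.rpow_one]
      field_simp
    · filter_upwards [self_mem_nhdsWithin] with τ (hτ : 0 < τ) h
      exact absurd h hτ.ne'
  have h1 : Tendsto (fun τ => a τ / τ) (𝓝[>] (0:ℝ)) (𝓝 1) := by
    have := hlo.tendsto_div_nhds_zero
    have h2 : Tendsto (fun τ => (a τ - τ) / τ + 1) (𝓝[>] (0:ℝ)) (𝓝 (0 + 1)) :=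
      this.add tendsto_const_nhds
    rw [zero_add] at h2
    refine h2.congr' ?_
    filter_upwards [self_mem_nhdsWithin] with τ (hτ : 0 < τ)
    field_simp
    ring
  -- get δ
  have hev : ∀ᶠ τ in 𝓝[>] (0:ℝ), ‖a τ - τ‖ ≤ 1/2 * ‖τ ^ (1+ε)‖ :=
    hMilne.def (by norm_num)
  obtain ⟨u, hu0, hu⟩ := mem_nhdsGT_iff_exists_Ioo_subset.mp hev
  rw [Set.mem_Ioi] at hu0
  set δ : ℝ := min (min (u/2) 1) τ₀ with hδ_def
  have hδ0 : 0 < δ := lt_min (lt_min (by linarith) one_pos) hτ₀0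
  have hδu : δ < u := lt_of_le_of_lt (le_trans (min_le_left _ _) (min_le_left _ _)) (by linarith)
  have hδ1 : δ ≤ 1 := le_trans (min_le_left _ _) (min_le_right _ _)
  have hδτ₀ : δ ≤ τ₀ := min_le_right _ _
  have hδT : δ < T := lt_of_le_of_lt hδτ₀ hτ₀T
  have hIocsub : Set.Ioc 0 δ ⊆ Set.Ioo 0 T := fun s hs => ⟨hs.1, lt_of_le_of_lt hs.2 hδT⟩
  -- pointwise facts on Ioc 0 δ
  have key : ∀ s ∈ Set.Ioc (0:ℝ) δ, s/2 ≤ a s ∧ |g s| ≤ s ^ (ε - 1) := by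
    intro s hs
    have hs0 : 0 < s := hs.1
    have hsu : s < u := lt_of_le_of_lt hs.2 hδu
    have hs1 : s ≤ 1 := le_trans hs.2 hδ1
    have hb := hu ⟨hs0, hsu⟩
    simp only [Set.mem_setOf_eq, Real.norm_eq_abs] at hb
    have hrpos : 0 < s ^ (1+ε) := Real.rpow_pos_of_pos hs0 _
    rw [abs_of_pos hrpos] at hb
    have hsplit : s ^ (1+ε) = s * s ^ ε := by
      rw [Real.rpow_add hs0, Real.rpow_one]
    have hεle : s ^ ε ≤ 1 := Real.rpow_le_one hs0.le hs1 hε.le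
    have hple : s ^ (1+ε) ≤ s := by
      rw [hsplit]; nlinarith
    have habs : |a s - s| ≤ s/2 := le_trans hb (by linarith)
    have ha2 : s/2 ≤ a s := by
      have := abs_le.mp habs
      linarith [this.1]
    have haspos : 0 < a s := lt_of_lt_of_le (by linarith) ha2
    refine ⟨ha2, ?_⟩
    have hrw : g s = (s - a s) / (a s * s) := by
      rw [hg_def]; field_simp
    rw [hrw, abs_div, abs_of_pos (mul_pos haspos hs0), abs_sub_comm]
    rw [div_le_iff₀ (mul_pos haspos hs0)]
    have h2 : s ^ (ε - 1) * (a s * s) ≥ s ^ (ε - 1) * (s/2 * s) := by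
      have hrp : 0 < s ^ (ε - 1) := Real.rpow_pos_of_pos hs0 _
      have hm : s/2 * s ≤ a s * s := mul_le_mul_of_nonneg_right ha2 hs0.le
      exact mul_le_mul_of_nonneg_left hm hrp.le
    have e1 : s ^ (ε - 1) * s = s ^ ε := by
      rw [Real.rpow_sub hs0, Real.rpow_one, div_mul_cancel₀ _ hs0.ne']
    have e2 : s ^ (ε - 1) * s * s = s ^ (1 + ε) := by
      rw [e1, hsplit]; ring
    have h3 : s ^ (ε - 1) * (s/2 * s) = s ^ (1+ε) / 2 := by
      have e3 : s ^ (ε - 1) * (s/2 * s) = (s ^ (ε - 1) * s * s) / 2 := by ring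
      rw [e3, e2]
    calc |a s - s| ≤ 1/2 * s ^ (1+ε) := hb
      _ = s ^ (1+ε) / 2 := by ring
      _ = s ^ (ε-1) * (s/2 * s) := h3.symm
      _ ≤ s ^ (ε-1) * (a s * s) := h2
  -- integrability of g on Ioc 0 δ
  have hdom_int : IntegrableOn (fun s : ℝ => s ^ (ε - 1)) (Set.Ioc 0 δ) := by
    have := intervalIntegral.intervalIntegrable_rpow' (a := 0) (b := δ) (r := ε - 1) (by linarith)
    exact (intervalIntegrable_iff_integrableOn_Ioc_of_le hδ0.le).mp this
  have hg_meas : AEStronglyMeasurable g (volume.restrict (Set.Ioc 0 δ)) :=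
    (hg_cont.mono hIocsub).aestronglyMeasurable measurableSet_Ioc
  have hg_int : IntegrableOn g (Set.Ioc 0 δ) := by
    refine Integrable.mono' hdom_int hg_meas ?_
    rw [ae_restrict_iff' measurableSet_Ioc]
    filter_upwards with s hs
    rw [Real.norm_eq_abs]
    exact (key s hs).2
  set I : ℝ := ∫ s in Set.Ioc 0 δ, g s with hI_def
  -- tendsto of tail integral
  have htail : Tendsto (fun τ => ∫ s in τ..δ, g s) (𝓝[>] (0:ℝ)) (𝓝 I) := by
    have hsmall : Tendsto (fun τ => ∫ s in Set.Ioc 0 τ, g s) (𝓝[>] (0:ℝ)) (𝓝 0) := by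
      apply squeeze_zero_norm'
      · filter_upwards [self_mem_nhdsWithin, eventually_nhdsWithin_of_eventually_nhds
          (eventually_lt_nhds hδ0)] with τ (hτ0 : 0 < τ) (hτδ : τ < δ)
        have hsub : Set.Ioc 0 τ ⊆ Set.Ioc 0 δ := Set.Ioc_subset_Ioc_right hτδ.le
        have hint1 : IntegrableOn g (Set.Ioc 0 τ) := hg_int.mono_set hsub
        have hint2 : IntegrableOn (fun s : ℝ => s ^ (ε - 1)) (Set.Ioc 0 τ) :=
          hdom_int.mono_set hsub
        calc ‖∫ s in Set.Ioc 0 τ, g s‖ ≤ ∫ s in Set.Ioc 0 τ, s ^ (ε - 1) := by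
              apply MeasureTheory.norm_integral_le_of_norm_le hint2
              rw [ae_restrict_iff' measurableSet_Ioc]
              filter_upwards with s hs
              rw [Real.norm_eq_abs]
              exact (key s (hsub hs)).2
          _ = τ ^ ε / ε := by
              rw [← intervalIntegral.integral_of_le hτ0.le,
                integral_rpow (Or.inl (by linarith))]
              rw [Real.zero_rpow (by linarith : ε - 1 + 1 ≠ 0)]
              norm_num
      · have : Tendsto (fun τ : ℝ => τ ^ ε / ε) (𝓝[>] (0:ℝ)) (𝓝 (0 / ε)) :=
          hrpow0.div_const ε
        rwa [zero_div] at this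
    have heq : ∀ᶠ τ in 𝓝[>] (0:ℝ),
        I - ∫ s in Set.Ioc 0 τ, g s = ∫ s in τ..δ, g s := by
      filter_upwards [self_mem_nhdsWithin, eventually_nhdsWithin_of_eventually_nhds
        (eventually_lt_nhds hδ0)] with τ (hτ0 : 0 < τ) (hτδ : τ < δ)
      have hsub1 : Set.Ioc 0 τ ⊆ Set.Ioc 0 δ := Set.Ioc_subset_Ioc_right hτδ.le
      have hsub2 : Set.Ioc τ δ ⊆ Set.Ioc 0 δ := Set.Ioc_subset_Ioc_left hτ0.le
      have hunion : Set.Ioc 0 τ ∪ Set.Ioc τ δ = Set.Ioc 0 δ :=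
        Set.Ioc_union_Ioc_eq_Ioc hτ0.le hτδ.le
      have hdisj : Disjoint (Set.Ioc 0 τ) (Set.Ioc τ δ) := by
        apply Set.disjoint_left.mpr
        intro x hx1 hx2
        exact absurd hx1.2 (not_le.mpr hx2.1)
      have hsplit : I = (∫ s in Set.Ioc 0 τ, g s) + ∫ s in Set.Ioc τ δ, g s := by
        rw [hI_def, ← hunion,
          MeasureTheory.setIntegral_union hdisj measurableSet_Ioc
            (hg_int.mono_set hsub1) (hg_int.mono_set hsub2)]
      rw [intervalIntegral.integral_of_le hτδ.le]
      linarith [hsplit]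
    have := (tendsto_const_nhds (x := I)).sub hsmall
    rw [sub_zero] at this
    exact this.congr' heq
  -- the constant K
  have huIcc_sub : ∀ x y : ℝ, x ∈ Set.Ioo (0:ℝ) T → y ∈ Set.Ioo (0:ℝ) T →
      Set.uIcc x y ⊆ Set.Ioo (0:ℝ) T := fun x y hx hy =>
    Set.OrdConnected.uIcc_subset Set.ordConnected_Ioo hx hy
  have hδmem : δ ∈ Set.Ioo (0:ℝ) T := ⟨hδ0, hδT⟩
  set K : ℝ := ∫ s in τ₀..δ, 1 / a s with hK_def
  set L : ℝ := δ * Real.exp I / Real.exp K with hL_def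
  refine ⟨L, ?_, ?_⟩
  · exact div_pos (mul_pos hδ0 (Real.exp_pos _)) (Real.exp_pos _)
  -- main limit
  have hmain : ∀ᶠ τ in 𝓝[>] (0:ℝ),
      a τ / Real.exp (∫ s in τ₀..τ, 1 / a s)
        = (a τ / τ) * (δ / Real.exp K) * Real.exp (∫ s in τ..δ, g s) := by
    filter_upwards [self_mem_nhdsWithin, eventually_nhdsWithin_of_eventually_nhds
      (eventually_lt_nhds hδ0)] with τ (hτ0 : 0 < τ) (hτδ : τ < δ)
    have hτmem : τ ∈ Set.Ioo (0:ℝ) T := ⟨hτ0, lt_trans hτδ hδT⟩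
    have hint_a1 : IntervalIntegrable (fun s => 1 / a s) volume τ₀ δ :=
      (hinva_cont.mono (huIcc_sub _ _ ⟨hτ₀0, hτ₀T⟩ hδmem)).intervalIntegrable
    have hint_a2 : IntervalIntegrable (fun s => 1 / a s) volume δ τ :=
      (hinva_cont.mono (huIcc_sub _ _ hδmem hτmem)).intervalIntegrable
    have hadj : (∫ s in τ₀..δ, 1 / a s) + (∫ s in δ..τ, 1 / a s) = ∫ s in τ₀..τ, 1 / a s :=
      intervalIntegral.integral_add_adjacent_intervals hint_a1 hint_a2
    have hint_inv : IntervalIntegrable (fun s : ℝ => 1 / s) volume δ τ := by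
      apply ContinuousOn.intervalIntegrable
      apply continuousOn_const.div continuousOn_id
      intro x hx
      have := (huIcc_sub _ _ hδmem hτmem) hx
      exact this.1.ne'
    have hint_g : IntervalIntegrable g volume δ τ :=
      (hg_cont.mono (huIcc_sub _ _ hδmem hτmem)).intervalIntegrable
    have hsplit2 : (∫ s in δ..τ, 1 / a s) = (∫ s in δ..τ, 1 / s) + ∫ s in δ..τ, g s := by
      rw [← intervalIntegral.integral_add hint_inv hint_g]
      apply intervalIntegral.integral_congr
      intro s _
      simp only [hg_def]
      ring
    have hlog : (∫ s in δ..τ, 1 / s) = Real.log (τ / δ) := by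
      apply integral_one_div
      intro h
      have := (huIcc_sub _ _ hδmem hτmem) h
      exact absurd this.1 (lt_irrefl 0)
    have hrev : (∫ s in δ..τ, g s) = -∫ s in τ..δ, g s :=
      (intervalIntegral.integral_symm τ δ)
    rw [← hadj, hsplit2, hlog, hrev]
    rw [Real.exp_add, Real.exp_add, Real.exp_log (div_pos hτ0 hδ0), Real.exp_neg]
    have h1 : Real.exp K ≠ 0 := Real.exp_ne_zero _
    have h2 : Real.exp (∫ s in τ..δ, g s) ≠ 0 := Real.exp_ne_zero _
    rw [← hK_def]
    field_simp
  have hT1 : Tendsto (fun τ => (a τ / τ) * (δ / Real.exp K) * Real.exp (∫ s in τ..δ, g s))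
      (𝓝[>] (0:ℝ)) (𝓝 (1 * (δ / Real.exp K) * Real.exp I)) := by
    exact (h1.mul tendsto_const_nhds).mul (Real.continuous_exp.continuousAt.tendsto.comp htail)
  rw [show (1 : ℝ) * (δ / Real.exp K) * Real.exp I = L by rw [hL_def]; ring] at hT1
  exact hT1.congr' (hmain.mono fun τ h => h.symm)
end
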